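/- arXiv:1409.8625 — 2 statements merged into one kernel-verified Lean document; each statement's English description precedes it below -/
import Mathlib

section
/- (Lemma 1) Let Δ_t := ⟨q_{t−1}U_{i_t}A(xᵗ − xᵗ⁻¹), yᵗ⁺¹ − y⟩ − ⟨Ū_{i_t}Axᵗ, yᵗ − y⟩ + Σ_{i ≠ i_t}[J_i(y_iᵗ) − J_i(y_i)], where yᵗ⁺¹ is the dual update of the RPD algorithm determined by the choice of i_t, with xᵗ, xᵗ⁻¹, yᵗ fixed. If i_t is uniformly distributed on {1, …, p} (so that E_{i_t}[·] is the average over i_t ∈ {1, …, p}), then E_{i_t}[Δ_t] ≤ ⟨((1/p)q_{t−1} − (p−1)/p)Axᵗ − (1/p)q_{t−1}Axᵗ⁻¹, yᵗ − y⟩ + ((p−1)/p)[J(yᵗ) − J(y)] + (q_{t−1}²‖A‖₂²/(2pτ_t))‖xᵗ − xᵗ⁻¹‖₂² + (τ_t/2)E_{i_t}[‖yᵗ⁺¹ − yᵗ‖₂²]. -/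
open scoped RealInnerProductSpace BigOperators

noncomputable section

abbrev Primal (n : ℕ) := EuclideanSpace ℝ (Fin n)

abbrev DualSp {p : ℕ} (md : Fin p → ℕ) :=
  PiLp 2 (fun i => EuclideanSpace ℝ (Fin (md i)))

/-!
Averaging over the uniformly chosen block `i`, a sum over the blocks `j ≠ i` becomes
`(p - 1)/p` times the full sum, and the block `i` term of `⟪q A(xᵗ - xᵗ⁻¹), yᵗ⁺¹ - y⟫` splits into
`(1/p) q ⟪A(xᵗ - xᵗ⁻¹), yᵗ - y⟫` plus the cross term `q ⟪(A(xᵗ - xᵗ⁻¹))ᵢ, (yᵗ⁺¹ - yᵗ)ᵢ⟫`. Young's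
inequality bounds each cross term; summed over `i`, the blocks of `A(xᵗ - xᵗ⁻¹)` recombine into
`‖A(xᵗ - xᵗ⁻¹)‖² ≤ ‖A‖² ‖xᵗ - xᵗ⁻¹‖²`.
-/

theorem Finset.sum_sum_univ_erase {ι R : Type*} [Fintype ι] [DecidableEq ι] [CommRing R]
    (f : ι → R) :
    ∑ i, ∑ j ∈ Finset.univ.erase i, f j = ((Fintype.card ι : R) - 1) * ∑ j, f j := by
  simp only [Finset.sum_erase_eq_sub (Finset.mem_univ _), Finset.sum_sub_distrib,
    Finset.sum_const, Finset.card_univ, nsmul_eq_mul]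
  ring

theorem mul_inner_le_young {F : Type*} [NormedAddCommGroup F] [InnerProductSpace ℝ F]
    {τ : ℝ} (hτ : 0 < τ) (q : ℝ) (a b : F) :
    q * ⟪a, b⟫ ≤ q ^ 2 / (2 * τ) * ‖a‖ ^ 2 + τ / 2 * ‖b‖ ^ 2 := by
  have hgap : q ^ 2 / (2 * τ) * ‖a‖ ^ 2 + τ / 2 * ‖b‖ ^ 2 - q * ⟪a, b⟫
      = ‖q • a - τ • b‖ ^ 2 / (2 * τ) := by
    rw [norm_sub_sq_real, real_inner_smul_left, real_inner_smul_right, norm_smul, norm_smul,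
      mul_pow, mul_pow, Real.norm_eq_abs, Real.norm_eq_abs, sq_abs, sq_abs]
    field_simp
    ring
  have : 0 ≤ ‖q • a - τ • b‖ ^ 2 / (2 * τ) := by positivity
  linarith

namespace PiLp

variable {ι : Type*} [Fintype ι] {E : ι → Type*} [∀ i, NormedAddCommGroup (E i)]
  [∀ i, InnerProductSpace ℝ (E i)]

theorem sum_inner_diag_sub_eq (a y w : PiLp 2 E) (b : ι → PiLp 2 E) :
    ∑ i, ⟪a i, b i i - w i⟫ = ∑ i, ⟪a i, b i i - y i⟫ + ⟪a, y - w⟫ := by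
  rw [PiLp.inner_apply, ← Finset.sum_add_distrib]
  refine Finset.sum_congr rfl fun i _ => ?_
  rw [PiLp.sub_apply, ← inner_add_right, sub_add_sub_cancel]

theorem sum_mul_inner_diag_sub_le {τ : ℝ} (hτ : 0 < τ) (q : ℝ) (a y : PiLp 2 E)
    (b : ι → PiLp 2 E) :
    ∑ i, q * ⟪a i, b i i - y i⟫ ≤ q ^ 2 / (2 * τ) * ‖a‖ ^ 2 + τ / 2 * ∑ i, ‖b i - y‖ ^ 2 := by
  calc ∑ i, q * ⟪a i, b i i - y i⟫
      ≤ ∑ i, (q ^ 2 / (2 * τ) * ‖a i‖ ^ 2 + τ / 2 * ‖b i - y‖ ^ 2) := by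
        refine Finset.sum_le_sum fun i _ => (mul_inner_le_young hτ q _ _).trans ?_
        gcongr
        exact PiLp.norm_apply_le (b i - y) i
    _ = q ^ 2 / (2 * τ) * ‖a‖ ^ 2 + τ / 2 * ∑ i, ‖b i - y‖ ^ 2 := by
        rw [Finset.sum_add_distrib, ← Finset.mul_sum, ← Finset.mul_sum, PiLp.norm_sq_eq_of_L2]

end PiLp

theorem rpd_lemma1_general
    (n p : ℕ) (md : Fin p → ℕ)
    (Js : (i : Fin p) → EuclideanSpace ℝ (Fin (md i)) → ℝ)
    (A : Primal n →L[ℝ] DualSp md)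
    (qprev τt : ℝ) (hτt : 0 < τt)
    (xt xtm : Primal n) (yt : DualSp md)
    (ynext : Fin p → DualSp md)
    (yy : DualSp md)
    :
    (∑ i : Fin p,
        (qprev * ⟪(A (xt - xtm)) i, ynext i i - yy i⟫
          - (∑ j ∈ Finset.univ.erase i, ⟪(A xt) j, yt j - yy j⟫)
          + ∑ j ∈ Finset.univ.erase i, (Js j (yt j) - Js j (yy j)))) / (p : ℝ)
      ≤ ⟪(qprev / (p : ℝ) - ((p : ℝ) - 1) / (p : ℝ)) • A xt - (qprev / (p : ℝ)) • A xtm,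
            yt - yy⟫
        + ((p : ℝ) - 1) / (p : ℝ) * ((∑ i, Js i (yt i)) - ∑ i, Js i (yy i))
        + qprev ^ 2 * ‖A‖ ^ 2 / (2 * (p : ℝ) * τt) * ‖xt - xtm‖ ^ 2
        + τt / 2 * ((∑ i : Fin p, ‖ynext i - yt‖ ^ 2) / (p : ℝ)) := by
  set a := A (xt - xtm)
  have hcross : ∑ i, qprev * ⟪a i, ynext i i - yt i⟫ ≤
      qprev ^ 2 / (2 * τt) * (‖A‖ ^ 2 * ‖xt - xtm‖ ^ 2) + τt / 2 * ∑ i, ‖ynext i - yt‖ ^ 2 := by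
    refine (PiLp.sum_mul_inner_diag_sub_le hτt qprev a yt ynext).trans ?_
    gcongr
    rw [← mul_pow]
    gcongr
    exact A.le_opNorm _
  have hsum : ∑ i, (qprev * ⟪a i, ynext i i - yy i⟫
        - (∑ j ∈ Finset.univ.erase i, ⟪(A xt) j, yt j - yy j⟫)
        + ∑ j ∈ Finset.univ.erase i, (Js j (yt j) - Js j (yy j)))
      = ∑ i, qprev * ⟪a i, ynext i i - yt i⟫ + qprev * ⟪a, yt - yy⟫
        - ((p : ℝ) - 1) * ⟪A xt, yt - yy⟫
        + ((p : ℝ) - 1) * ((∑ i, Js i (yt i)) - ∑ i, Js i (yy i)) := by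
    simp only [Finset.sum_add_distrib, Finset.sum_sub_distrib, ← Finset.mul_sum,
      PiLp.sum_inner_diag_sub_eq a yt yy ynext, Finset.sum_sum_univ_erase, Fintype.card_fin]
    rw [PiLp.inner_apply (A xt)]
    simp only [PiLp.sub_apply]
    ring
  have hinner : ⟪(qprev / (p : ℝ) - ((p : ℝ) - 1) / (p : ℝ)) • A xt - (qprev / (p : ℝ)) • A xtm,
      yt - yy⟫ = (qprev * ⟪a, yt - yy⟫ - ((p : ℝ) - 1) * ⟪A xt, yt - yy⟫) / p := by
    simp only [a, map_sub, inner_sub_left, real_inner_smul_left]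
    ring
  rw [hsum, hinner]
  calc _ ≤ (qprev * ⟪a, yt - yy⟫ - ((p : ℝ) - 1) * ⟪A xt, yt - yy⟫
          + ((p : ℝ) - 1) * ((∑ i, Js i (yt i)) - ∑ i, Js i (yy i))
          + qprev ^ 2 / (2 * τt) * (‖A‖ ^ 2 * ‖xt - xtm‖ ^ 2)
          + τt / 2 * ∑ i, ‖ynext i - yt‖ ^ 2) / p :=
        div_le_div_of_nonneg_right (by linarith) p.cast_nonneg
    _ = _ := by ring

theorem rpd_lemma1
    (n p : ℕ) (hp : 0 < p) (md : Fin p → ℕ)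
    (Ys : (i : Fin p) → Set (EuclideanSpace ℝ (Fin (md i))))
    (hYconv : ∀ i, Convex ℝ (Ys i)) (hYcl : ∀ i, IsClosed (Ys i))
    (Js : (i : Fin p) → EuclideanSpace ℝ (Fin (md i)) → ℝ)
    (hJconv : ∀ i, ConvexOn ℝ Set.univ (Js i))
    (A : Primal n →L[ℝ] DualSp md)
    (qprev τt : ℝ) (hτt : 0 < τt)
    (xt xtm xbt : Primal n) (yt : DualSp md) (hyt : ∀ i, yt i ∈ Ys i)
    (ynext : Fin p → DualSp md)
    (hynext : ∀ i : Fin p,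
      ynext i i ∈ Ys i ∧
      (∀ u ∈ Ys i,
        -⟪(A xbt) i, ynext i i⟫ + Js i (ynext i i) + τt / 2 * ‖ynext i i - yt i‖ ^ 2
        ≤ -⟪(A xbt) i, u⟫ + Js i u + τt / 2 * ‖u - yt i‖ ^ 2) ∧
      (∀ j, j ≠ i → ynext i j = yt j))
    (yy : DualSp md) (hyy : ∀ i, yy i ∈ Ys i)
    :
    (∑ i : Fin p,
        (qprev * ⟪(A (xt - xtm)) i, ynext i i - yy i⟫
          - (∑ j ∈ Finset.univ.erase i, ⟪(A xt) j, yt j - yy j⟫)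
          + ∑ j ∈ Finset.univ.erase i, (Js j (yt j) - Js j (yy j)))) / (p : ℝ)
      ≤ ⟪(qprev / (p : ℝ) - ((p : ℝ) - 1) / (p : ℝ)) • A xt - (qprev / (p : ℝ)) • A xtm,
            yt - yy⟫
        + ((p : ℝ) - 1) / (p : ℝ) * ((∑ i, Js i (yt i)) - ∑ i, Js i (yy i))
        + qprev ^ 2 * ‖A‖ ^ 2 / (2 * (p : ℝ) * τt) * ‖xt - xtm‖ ^ 2
        + τt / 2 * ((∑ i : Fin p, ‖ynext i - yt‖ ^ 2) / (p : ℝ)) :=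
  rpd_lemma1_general n p md Js A qprev τt hτt xt xtm yt ynext yy
end
end

section
/- (Lemma, non-Euclidean expectation bound) In the Bregman setup, let Δ_t := ⟨q_{t−1}U_{i_t}A(xᵗ − xᵗ⁻¹), yᵗ⁺¹ − y⟩ − ⟨Ū_{i_t}Axᵗ, yᵗ − y⟩ + Σ_{i ≠ i_t}[J_i(y_iᵗ) − J_i(y_i)], where yᵗ⁺¹ is the dual update of the non-Euclidean RPD algorithm determined by the choice of i_t, with xᵗ, xᵗ⁻¹, yᵗ fixed. If i_t is uniformly distributed on {1, …, p} (so that E_{i_t}[·] is the average over i_t ∈ {1, …, p}), then E_{i_t}[Δ_t] ≤ ⟨((1/p)q_{t−1} − (p−1)/p)Axᵗ − (1/p)q_{t−1}Axᵗ⁻¹, yᵗ − y⟩ + ((p−1)/p)[J(yᵗ) − J(y)] + (q_{t−1}²‖A‖²/(2pτ_t))‖xᵗ − xᵗ⁻¹‖² + (τ_t/2)E_{i_t}[‖yᵗ⁺¹ − yᵗ‖²]. -/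
/-!
Only block `i_t` of the dual iterate moves, so the bilinear term splits as
`q ⟪A(xᵗ - xᵗ⁻¹), yᵗ - y⟫ + q ⟪(A(xᵗ - xᵗ⁻¹))_{i_t}, yᵗ⁺¹_{i_t} - yᵗ_{i_t}⟫`.
The second piece is bounded by the dual-norm pairing `⟪v, w⟫ ≤ ‖v‖_{i,*} ‖w‖_i` and
Young's inequality, and the dual norms of the blocks of `A(xᵗ - xᵗ⁻¹)` have squared sum
at most `‖A‖² ‖xᵗ - xᵗ⁻¹‖²`. Averaging over `i_t`, each sum over `j ≠ i_t` counts every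
block `p - 1` times.
-/

open scoped RealInnerProductSpace BigOperators

noncomputable section

theorem Finset.sum_sum_erase_univ {ι R : Type*} [Fintype ι] [DecidableEq ι] [CommRing R]
    (g : ι → R) :
    ∑ i, ∑ j ∈ Finset.univ.erase i, g j = ((Fintype.card ι : R) - 1) * ∑ j, g j := by
  simp only [Finset.sum_erase_eq_sub (Finset.mem_univ _), Finset.sum_sub_distrib,
    Finset.sum_const, Finset.card_univ, nsmul_eq_mul]
  ring

namespace Seminorm

variable {E : Type*} [NormedAddCommGroup E]

theorem exists_pos_mul_norm_le [NormedSpace ℝ E] [FiniteDimensional ℝ E] (p : Seminorm ℝ E)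
    (hp : ∀ v, p v = 0 → v = 0) : ∃ c > 0, ∀ u, c * ‖u‖ ≤ p u := by
  cases subsingleton_or_nontrivial E with
  | inl _ => exact ⟨1, one_pos, fun u => by simp [Subsingleton.elim u 0]⟩
  | inr _ =>
    have hcont : Continuous p :=
      continuousOn_univ.mp (p.convexOn.continuousOn isOpen_univ)
    obtain ⟨u₀, hu₀, hmin⟩ := (isCompact_sphere (0 : E) 1).exists_isMinOn
      (NormedSpace.sphere_nonempty.mpr zero_le_one) hcont.continuousOn
    have hu₀ne : u₀ ≠ 0 := ne_zero_of_mem_unit_sphere ⟨u₀, hu₀⟩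
    refine ⟨p u₀, (apply_nonneg p u₀).lt_of_ne fun h => hu₀ne (hp u₀ h.symm), fun u => ?_⟩
    rcases eq_or_ne u 0 with rfl | hu
    · simp
    have hnu : 0 < ‖u‖ := norm_pos_iff.mpr hu
    have hsph : ‖u‖⁻¹ • u ∈ Metric.sphere (0 : E) 1 := by
      simp [norm_smul, hnu.ne']
    have hle : p u₀ ≤ ‖u‖⁻¹ * p u := by
      simpa [map_smul_eq_mul, abs_of_pos hnu] using hmin hsph
    calc p u₀ * ‖u‖ ≤ ‖u‖⁻¹ * p u * ‖u‖ := by gcongr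
      _ = p u := by field_simp

variable [InnerProductSpace ℝ E]

def dualNorm (p : Seminorm ℝ E) (v : E) : ℝ :=
  sSup {r : ℝ | ∃ u, p u ≤ 1 ∧ r = ⟪v, u⟫}

variable [FiniteDimensional ℝ E] (p : Seminorm ℝ E)

theorem bddAbove_inner_unitBall (hp : ∀ v, p v = 0 → v = 0) (v : E) :
    BddAbove {r : ℝ | ∃ u, p u ≤ 1 ∧ r = ⟪v, u⟫} := by
  obtain ⟨c, hc, hlow⟩ := p.exists_pos_mul_norm_le hp
  refine ⟨‖v‖ * c⁻¹, ?_⟩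
  rintro r ⟨u, hu, rfl⟩
  have hnu : ‖u‖ ≤ c⁻¹ := by
    rw [inv_eq_one_div, le_div_iff₀' hc]
    exact (hlow u).trans hu
  calc ⟪v, u⟫ ≤ ‖v‖ * ‖u‖ := real_inner_le_norm v u
    _ ≤ ‖v‖ * c⁻¹ := by gcongr

theorem inner_le_dualNorm_mul (hp : ∀ v, p v = 0 → v = 0) (v w : E) :
    ⟪v, w⟫ ≤ p.dualNorm v * p w := by
  rcases (apply_nonneg p w).eq_or_lt with hw | hw
  · simp [hp w hw.symm]
  have hmem : ⟪v, (p w)⁻¹ • w⟫ ∈ {r : ℝ | ∃ u, p u ≤ 1 ∧ r = ⟪v, u⟫} :=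
    ⟨(p w)⁻¹ • w, by simp [map_smul_eq_mul, abs_of_pos hw, hw.ne'], rfl⟩
  have hle : (p w)⁻¹ * ⟪v, w⟫ ≤ p.dualNorm v := by
    simpa [dualNorm, real_inner_smul_right]
      using le_csSup (p.bddAbove_inner_unitBall hp v) hmem
  calc ⟪v, w⟫ = (p w)⁻¹ * ⟪v, w⟫ * p w := by field_simp
    _ ≤ p.dualNorm v * p w := by gcongr

theorem mul_inner_le_dualNorm_sq_add (hp : ∀ v, p v = 0 → v = 0) {τ : ℝ} (hτ : 0 < τ) (q : ℝ)
    (v w : E) : q * ⟪v, w⟫ ≤ q ^ 2 / (2 * τ) * p.dualNorm v ^ 2 + τ / 2 * p w ^ 2 := by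
  have hpair : q * ⟪v, w⟫ ≤ |q| * p.dualNorm v * p w := by
    simpa [real_inner_smul_right, map_smul_eq_mul, mul_assoc, mul_left_comm |q|]
      using p.inner_le_dualNorm_mul hp v (q • w)
  have hyoung :
      |q| * p.dualNorm v * p w ≤ q ^ 2 / (2 * τ) * p.dualNorm v ^ 2 + τ / 2 * p w ^ 2 := by
    rw [← sub_nonneg]
    have hsq : q ^ 2 / (2 * τ) * p.dualNorm v ^ 2 + τ / 2 * p w ^ 2 - |q| * p.dualNorm v * p w
        = (|q| * p.dualNorm v - τ * p w) ^ 2 / (2 * τ) := by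
      field_simp
      rw [← sq_abs q]
      ring
    rw [hsq]
    positivity
  exact hpair.trans hyoung

theorem sum_mul_inner_update_le {ι : Type*} [Fintype ι] {F : ι → Type*}
    [∀ i, NormedAddCommGroup (F i)] [∀ i, InnerProductSpace ℝ (F i)]
    [∀ i, FiniteDimensional ℝ (F i)] (N : ∀ i, Seminorm ℝ (F i))
    (hN : ∀ i v, N i v = 0 → v = 0) {τ : ℝ} (hτ : 0 < τ) (q : ℝ) (a y : ∀ i, F i)
    (y' : ι → ∀ i, F i) (hy' : ∀ i j, j ≠ i → y' i j = y j) :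
    ∑ i, q * ⟪a i, y' i i - y i⟫
      ≤ q ^ 2 / (2 * τ) * ∑ i, (N i).dualNorm (a i) ^ 2
        + τ / 2 * ∑ i, ∑ j, N j (y' i j - y j) ^ 2 := by
  rw [Finset.mul_sum, Finset.mul_sum, ← Finset.sum_add_distrib]
  gcongr with i
  rw [Finset.sum_eq_single i (fun j _ hj => by simp [hy' i j hj]) (by simp)]
  exact (N i).mul_inner_le_dualNorm_sq_add (hN i) hτ q (a i) (y' i i - y i)

end Seminorm

theorem rpd_nonEuclidean_lemma_general
    (n p : ℕ) (md : Fin p → ℕ)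
    (Ys : (i : Fin p) → Set (EuclideanSpace ℝ (Fin (md i))))
    (Js : (i : Fin p) → EuclideanSpace ℝ (Fin (md i)) → ℝ)
    (A : Primal n →L[ℝ] DualSp md)
    (nE : Primal n → ℝ)
    (omB : (i : Fin p) → EuclideanSpace ℝ (Fin (md i)) → ℝ)
    (gB : (i : Fin p) → EuclideanSpace ℝ (Fin (md i)) → EuclideanSpace ℝ (Fin (md i)))
    (nB : (i : Fin p) → EuclideanSpace ℝ (Fin (md i)) → ℝ)
    (hnBadd : ∀ i v w, nB i (v + w) ≤ nB i v + nB i w)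
    (hnBsmul : ∀ i (c : ℝ) v, nB i (c • v) = |c| * nB i v)
    (hnBdef : ∀ i v, nB i v = 0 → v = 0)
    (nBd : (i : Fin p) → EuclideanSpace ℝ (Fin (md i)) → ℝ)
    (hnBd : ∀ i v, nBd i v = sSup {r : ℝ | ∃ u, nB i u ≤ 1 ∧ r = ⟪v, u⟫})
    (opA : ℝ)
    (hopA : ∀ v : Primal n, Real.sqrt (∑ i, nBd i ((A v) i) ^ 2) ≤ opA * nE v)
    (qprev τt : ℝ) (hτt : 0 < τt)
    (xt xtm xbt : Primal n) (yt : DualSp md)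
    (ynext : Fin p → DualSp md)
    (hynext : ∀ i : Fin p,
      ynext i i ∈ Ys i ∧
      (∀ u ∈ Ys i,
        -⟪(A xbt) i, ynext i i⟫ + Js i (ynext i i)
          + τt * (omB i (ynext i i) - omB i (yt i) - ⟪gB i (yt i), ynext i i - yt i⟫)
        ≤ -⟪(A xbt) i, u⟫ + Js i u
          + τt * (omB i u - omB i (yt i) - ⟪gB i (yt i), u - yt i⟫)) ∧
      (∀ j, j ≠ i → ynext i j = yt j))
    (yy : DualSp md)
    :
    (∑ i : Fin p,
        (qprev * ⟪(A (xt - xtm)) i, ynext i i - yy i⟫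
          - (∑ j ∈ Finset.univ.erase i, ⟪(A xt) j, yt j - yy j⟫)
          + ∑ j ∈ Finset.univ.erase i, (Js j (yt j) - Js j (yy j)))) / (p : ℝ)
      ≤ ⟪(qprev / (p : ℝ) - ((p : ℝ) - 1) / (p : ℝ)) • A xt - (qprev / (p : ℝ)) • A xtm,
            yt - yy⟫
        + ((p : ℝ) - 1) / (p : ℝ) * ((∑ i, Js i (yt i)) - ∑ i, Js i (yy i))
        + qprev ^ 2 * opA ^ 2 / (2 * (p : ℝ) * τt) * nE (xt - xtm) ^ 2
        + τt / 2 * ((∑ i : Fin p, ∑ j, nB j (ynext i j - yt j) ^ 2) / (p : ℝ)) := by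
  let N i : Seminorm ℝ (EuclideanSpace ℝ (Fin (md i))) :=
    Seminorm.of (nB i) (hnBadd i) (hnBsmul i)
  obtain rfl : nBd = fun i => (N i).dualNorm := funext fun i => funext (hnBd i)
  have hupdate := Seminorm.sum_mul_inner_update_le N hnBdef hτt qprev (A (xt - xtm)).ofLp
    yt.ofLp (fun i => (ynext i).ofLp) fun i => (hynext i).2.2
  have hdual := (Real.sqrt_le_iff.mp (hopA (xt - xtm))).2
  have hsplit : ∀ (x : DualSp md) i,
      ⟪x i, ynext i i - yy i⟫ = ⟪x i, yt i - yy i⟫ + ⟪x i, ynext i i - yt i⟫ := fun x i => by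
    rw [← inner_add_right, sub_add_sub_cancel']
  have hblocks : ∀ x : DualSp md, ∑ i, ⟪x i, yt i - yy i⟫ = ⟪x, yt - yy⟫ := fun x =>
    (PiLp.inner_apply x (yt - yy)).symm
  simp only [hsplit, mul_add, Finset.sum_add_distrib, Finset.sum_sub_distrib, ← Finset.mul_sum,
    Finset.sum_sum_erase_univ, Fintype.card_fin, hblocks, map_sub, inner_sub_left,
    real_inner_smul_left, ← mul_sub] at hupdate hdual ⊢
  calc _ ≤ (qprev * (⟪A xt, yt - yy⟫ - ⟪A xtm, yt - yy⟫)
          + (qprev ^ 2 / (2 * τt) * (opA * nE (xt - xtm)) ^ 2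
            + τt / 2 * ∑ i, ∑ j, nB j (ynext i j - yt j) ^ 2)
          - (p - 1) * ⟪A xt, yt - yy⟫
          + (p - 1) * ((∑ i, Js i (yt i)) - ∑ i, Js i (yy i))) / p := by
        gcongr
        exact hupdate.trans (by gcongr _ * ?_ + _)
    _ = _ := by ring

theorem rpd_nonEuclidean_lemma
    (n p : ℕ) (hp : 0 < p) (md : Fin p → ℕ)
    (Ys : (i : Fin p) → Set (EuclideanSpace ℝ (Fin (md i))))
    (hYconv : ∀ i, Convex ℝ (Ys i)) (hYcl : ∀ i, IsClosed (Ys i))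
    (Js : (i : Fin p) → EuclideanSpace ℝ (Fin (md i)) → ℝ)
    (hJconv : ∀ i, ConvexOn ℝ Set.univ (Js i))
    (A : Primal n →L[ℝ] DualSp md)
    (omX : Primal n → ℝ) (gX : Primal n → Primal n)
    (homXdiff : ∀ v, HasGradientAt omX (gX v) v)
    (homXconv : ConvexOn ℝ Set.univ omX)
    (nE : Primal n → ℝ)
    (hnE0 : ∀ v, 0 ≤ nE v)
    (hnEadd : ∀ v w, nE (v + w) ≤ nE v + nE w)
    (hnEsmul : ∀ (c : ℝ) v, nE (c • v) = |c| * nE v)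
    (hnEdef : ∀ v, nE v = 0 → v = 0)
    (homXstrong : ∀ v w, nE (v - w) ^ 2 ≤ ⟪gX v - gX w, v - w⟫)
    (omB : (i : Fin p) → EuclideanSpace ℝ (Fin (md i)) → ℝ)
    (gB : (i : Fin p) → EuclideanSpace ℝ (Fin (md i)) → EuclideanSpace ℝ (Fin (md i)))
    (homBdiff : ∀ i v, HasGradientAt (omB i) (gB i v) v)
    (homBconv : ∀ i, ConvexOn ℝ Set.univ (omB i))
    (nB : (i : Fin p) → EuclideanSpace ℝ (Fin (md i)) → ℝ)
    (hnB0 : ∀ i v, 0 ≤ nB i v)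
    (hnBadd : ∀ i v w, nB i (v + w) ≤ nB i v + nB i w)
    (hnBsmul : ∀ i (c : ℝ) v, nB i (c • v) = |c| * nB i v)
    (hnBdef : ∀ i v, nB i v = 0 → v = 0)
    (homBstrong : ∀ i v w, nB i (v - w) ^ 2 ≤ ⟪gB i v - gB i w, v - w⟫)
    (nBd : (i : Fin p) → EuclideanSpace ℝ (Fin (md i)) → ℝ)
    (hnBd : ∀ i v, nBd i v = sSup {r : ℝ | ∃ u, nB i u ≤ 1 ∧ r = ⟪v, u⟫})
    (opA : ℝ) (hopA0 : 0 ≤ opA)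
    (hopA : ∀ v : Primal n, Real.sqrt (∑ i, nBd i ((A v) i) ^ 2) ≤ opA * nE v)
    (qprev τt : ℝ) (hτt : 0 < τt)
    (xt xtm xbt : Primal n) (yt : DualSp md) (hyt : ∀ i, yt i ∈ Ys i)
    (ynext : Fin p → DualSp md)
    (hynext : ∀ i : Fin p,
      ynext i i ∈ Ys i ∧
      (∀ u ∈ Ys i,
        -⟪(A xbt) i, ynext i i⟫ + Js i (ynext i i)
          + τt * (omB i (ynext i i) - omB i (yt i) - ⟪gB i (yt i), ynext i i - yt i⟫)
        ≤ -⟪(A xbt) i, u⟫ + Js i u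
          + τt * (omB i u - omB i (yt i) - ⟪gB i (yt i), u - yt i⟫)) ∧
      (∀ j, j ≠ i → ynext i j = yt j))
    (yy : DualSp md) (hyy : ∀ i, yy i ∈ Ys i)
    :
    (∑ i : Fin p,
        (qprev * ⟪(A (xt - xtm)) i, ynext i i - yy i⟫
          - (∑ j ∈ Finset.univ.erase i, ⟪(A xt) j, yt j - yy j⟫)
          + ∑ j ∈ Finset.univ.erase i, (Js j (yt j) - Js j (yy j)))) / (p : ℝ)
      ≤ ⟪(qprev / (p : ℝ) - ((p : ℝ) - 1) / (p : ℝ)) • A xt - (qprev / (p : ℝ)) • A xtm,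
            yt - yy⟫
        + ((p : ℝ) - 1) / (p : ℝ) * ((∑ i, Js i (yt i)) - ∑ i, Js i (yy i))
        + qprev ^ 2 * opA ^ 2 / (2 * (p : ℝ) * τt) * nE (xt - xtm) ^ 2
        + τt / 2 * ((∑ i : Fin p, ∑ j, nB j (ynext i j - yt j) ^ 2) / (p : ℝ)) :=
  rpd_nonEuclidean_lemma_general n p md Ys Js A nE omB gB nB hnBadd hnBsmul hnBdef nBd hnBd opA hopA
    qprev τt hτt xt xtm xbt yt ynext hynext yy
end
end
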